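/- Under the LEN setup, assume F is monotone, F' is L-Lipschitz, M ≥ 4mL, and there exists z* ∈ E with F(z*) = 0; set R := ‖z_0 − z*‖. Then the iterates are bounded: for every t ≥ 0, ‖z_t − z*‖ ≤ R and ‖z_{t+1/2} − z*‖ ≤ 3R; in particular all iterates z_t and z_{t+1/2} lie in the closed ball of radius 3R centered at z*. -/

import Mathlib

open scoped RealInnerProductSpace

lemma len_taylor {E : Type*} [NormedAddCommGroup E] [InnerProductSpace ℝ E]
    (F : E → E) (F' : E → E →L[ℝ] E) (L : ℝ)
    (hdiff : ∀ x : E, HasFDerivAt F (F' x) x)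
    (hLip : ∀ x y : E, ‖F' x - F' y‖ ≤ L * ‖x - y‖)
    (hL : 0 ≤ L) (a b : E) :
    ‖F b - F a - F' a (b - a)‖ ≤ L * ‖b - a‖ * ‖b - a‖ := by
  set g : E → E := fun x => F x - F' a x with hg
  have hmem : ∀ x ∈ segment ℝ a b, ‖x - a‖ ≤ ‖b - a‖ := by
    rintro x ⟨u, v, hu, hv, huv, rfl⟩
    have h1 : u • a + v • b - a = v • (b - a) := by
      have hu1 : u = 1 - v := by linarith
      rw [hu1]; module
    rw [h1, norm_smul, Real.norm_eq_abs, abs_of_nonneg hv]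
    nlinarith [norm_nonneg (b - a)]
  have key := Convex.norm_image_sub_le_of_norm_hasFDerivWithin_le
    (f := g) (f' := fun x => F' x - F' a) (s := segment ℝ a b) (C := L * ‖b - a‖)
    (fun x _ => ((hdiff x).sub ((F' a).hasFDerivAt)).hasFDerivWithinAt)
    (fun x hx => le_trans (hLip x a) (by nlinarith [hmem x hx, norm_nonneg (x - a)]))
    (convex_segment a b) (left_mem_segment ℝ a b) (right_mem_segment ℝ a b)
  have heq : g b - g a = F b - F a - F' a (b - a) := by
    simp [hg, map_sub]; abel
  calc ‖F b - F a - F' a (b - a)‖ = ‖g b - g a‖ := by rw [heq]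
    _ ≤ L * ‖b - a‖ * ‖b - a‖ := key

lemma len_descent {E : Type*} [NormedAddCommGroup E] [InnerProductSpace ℝ E]
    (F : E → E) (zstar : E) (hstar : F zstar = 0)
    (hmono : ∀ x y : E, 0 ≤ ⟪F x - F y, x - y⟫)
    (zt wt z1 : E) (η : ℝ) (hη : 0 ≤ η) (h1 : z1 = zt - η • F wt) :
    ‖z1 - zstar‖ ^ 2 ≤ ‖zt - zstar‖ ^ 2 - ‖wt - zt‖ ^ 2 + ‖z1 - wt‖ ^ 2 := by
  have e1 : ‖z1 - zstar‖ ^ 2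
      = ‖zt - zstar‖ ^ 2 - 2 * ⟪zt - zstar, η • F wt⟫ + ‖η • F wt‖ ^ 2 := by
    rw [h1, sub_right_comm, norm_sub_sq_real]
  have e2 : ‖z1 - wt‖ ^ 2
      = ‖zt - wt‖ ^ 2 - 2 * ⟪zt - wt, η • F wt⟫ + ‖η • F wt‖ ^ 2 := by
    rw [h1, sub_right_comm, norm_sub_sq_real]
  have e3 : ⟪zt - zstar, η • F wt⟫ - ⟪zt - wt, η • F wt⟫ = ⟪wt - zstar, η • F wt⟫ := by
    rw [← inner_sub_left]; congr 1; abel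
  have e4 : 0 ≤ ⟪wt - zstar, η • F wt⟫ := by
    rw [real_inner_smul_right]
    have := hmono wt zstar
    rw [hstar, sub_zero] at this
    rw [real_inner_comm] at this
    positivity
  have e5 : ‖wt - zt‖ = ‖zt - wt‖ := norm_sub_rev _ _
  rw [e5]; nlinarith [e4]

lemma len_error {E : Type*} [NormedAddCommGroup E] [InnerProductSpace ℝ E]
    (F : E → E) (F' : E → E →L[ℝ] E) (L M : ℝ) (hMpos : 0 < M) (hL : 0 ≤ L)
    (hdiff : ∀ x : E, HasFDerivAt F (F' x) x)
    (hLip : ∀ x y : E, ‖F' x - F' y‖ ≤ L * ‖x - y‖)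
    (zt wt zp z1 : E) (hne : wt ≠ zt)
    (hnewton : F zt + F' zp (wt - zt) + (M * ‖wt - zt‖) • (wt - zt) = 0)
    (η : ℝ) (hη : η = 1 / (M * ‖zt - wt‖)) (h1 : z1 = zt - η • F wt) :
    ‖z1 - wt‖ ≤ L / M * (‖wt - zt‖ + ‖zt - zp‖) := by
  have hr : 0 < ‖wt - zt‖ := norm_pos_iff.mpr (sub_ne_zero.mpr hne)
  have hη' : η = 1 / (M * ‖wt - zt‖) := by rw [hη, norm_sub_rev]
  have hη0 : 0 < η := by rw [hη']; positivity
  have hηr : η * (M * ‖wt - zt‖) = 1 := by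
    rw [hη']; field_simp
  have hFz : F zt + F' zp (wt - zt) = -((M * ‖wt - zt‖) • (wt - zt)) :=
    eq_neg_of_add_eq_zero_left hnewton
  set T1 := F wt - F zt - F' zt (wt - zt) with hT1
  set T2 := (F' zt - F' zp) (wt - zt) with hT2
  have h3 : F wt = (T1 + T2) + (F zt + F' zp (wt - zt)) := by
    simp [hT1, hT2, ContinuousLinearMap.sub_apply]
  have h4 : η • ((M * ‖wt - zt‖) • (wt - zt)) = wt - zt := by
    rw [smul_smul, hηr, one_smul]
  have key : z1 - wt = -(η • (T1 + T2)) := by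
    rw [h1, h3, hFz, smul_add, smul_neg, h4]
    abel
  have hb1 : ‖T1‖ ≤ L * ‖wt - zt‖ * ‖wt - zt‖ :=
    len_taylor F F' L hdiff hLip hL zt wt
  have hb2 : ‖T2‖ ≤ L * ‖zt - zp‖ * ‖wt - zt‖ := by
    calc ‖T2‖ ≤ ‖F' zt - F' zp‖ * ‖wt - zt‖ := ContinuousLinearMap.le_opNorm _ _
      _ ≤ L * ‖zt - zp‖ * ‖wt - zt‖ := by
          have := hLip zt zp
          nlinarith [norm_nonneg (wt - zt)]
  have hnorm : ‖z1 - wt‖ ≤ η * (L * ‖wt - zt‖ * ‖wt - zt‖ + L * ‖zt - zp‖ * ‖wt - zt‖) := by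
    rw [key, norm_neg, norm_smul, Real.norm_eq_abs, abs_of_pos hη0]
    have := norm_add_le T1 T2
    nlinarith
  have heq : η * (L * ‖wt - zt‖ * ‖wt - zt‖ + L * ‖zt - zp‖ * ‖wt - zt‖)
      = L / M * (‖wt - zt‖ + ‖zt - zp‖) := by
    rw [hη']; field_simp
  linarith [hnorm, heq.le]
lemma len_block (m : ℕ) (hm : 1 ≤ m) (ρ : ℝ) (hρ0 : 0 ≤ ρ) (hρm : (m : ℝ) * ρ ≤ 1/4)
    (r e : ℕ → ℝ) (hr0 : ∀ i, 0 ≤ r i) (he0 : ∀ i, 0 ≤ e i)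
    (hem : ∀ j, j < m →
      e j ≤ ρ * (∑ i ∈ Finset.range (j+1), r i + ∑ i ∈ Finset.range j, e i)) :
    ∀ j, j < m →
      ∑ i ∈ Finset.range (j+1), e i ^ 2 ≤ 9/64 * ∑ i ∈ Finset.range (j+1), r i ^ 2 := by
  set S : ℕ → ℝ := fun j => ∑ i ∈ Finset.range (j+1), r i with hSdef
  have hS : ∀ j, S j = ∑ i ∈ Finset.range (j+1), r i := fun _ => rfl
  have hS0 : ∀ j, 0 ≤ S j := fun j => Finset.sum_nonneg fun i _ => hr0 i
  have hSmono : ∀ i j : ℕ, i ≤ j → S i ≤ S j := by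
    intro i j hij
    apply Finset.sum_le_sum_of_subset_of_nonneg (Finset.range_subset_range.mpr (by omega))
    intro k _ _; exact hr0 k
  have hbc : ∀ j, j < m →
      e j ≤ 3/2 * ρ * S j ∧ ∑ i ∈ Finset.range (j+1), e i ≤ 1/2 * S j := by
    intro j
    induction j using Nat.strong_induction_on with
    | _ j IH =>
      intro hj
      have hEprev : ∑ i ∈ Finset.range j, e i ≤ 1/2 * S j := by
        match j with
        | 0 =>
          simp only [Finset.range_zero, Finset.sum_empty]
          exact mul_nonneg (by norm_num) (hS0 0)
        | Nat.succ i =>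
          have h := (IH i (by omega) (by omega)).2
          have h2 := hSmono i (i+1) (by omega)
          linarith
      have hb : e j ≤ 3/2 * ρ * S j := by
        have h1 := hem j hj
        rw [← hS] at h1
        have h2 : ρ * (S j + ∑ i ∈ Finset.range j, e i) ≤ ρ * (3/2 * S j) :=
          mul_le_mul_of_nonneg_left (by linarith) hρ0
        calc e j ≤ ρ * (S j + ∑ i ∈ Finset.range j, e i) := h1
          _ ≤ ρ * (3/2 * S j) := h2
          _ = 3/2 * ρ * S j := by ring
      refine ⟨hb, ?_⟩
      have hball : ∀ i ∈ Finset.range (j+1), e i ≤ 3/2 * ρ * S j := by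
        intro i hi
        rw [Finset.mem_range] at hi
        rcases eq_or_lt_of_le (Nat.lt_succ_iff.mp hi) with h | h
        · exact h ▸ hb
        · have h2 := (IH i h (by omega)).1
          have h3 := hSmono i j (le_of_lt h)
          nlinarith
      have hjm : ((j : ℝ) + 1) ≤ (m : ℝ) := by exact_mod_cast hj
      calc ∑ i ∈ Finset.range (j+1), e i
          ≤ ∑ _i ∈ Finset.range (j+1), (3/2 * ρ * S j) := Finset.sum_le_sum hball
        _ = ((j : ℝ) + 1) * (3/2 * ρ * S j) := by
            rw [Finset.sum_const, Finset.card_range, nsmul_eq_mul]; push_cast; ring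
        _ ≤ 1/2 * S j := by
            have h5 : ((j : ℝ)+1) * ρ ≤ 1/4 := by nlinarith
            nlinarith [mul_le_mul_of_nonneg_right h5 (hS0 j), hS0 j, hρ0]
  intro j hj
  have hcs : S j ^ 2 ≤ ((j : ℝ) + 1) * ∑ i ∈ Finset.range (j+1), r i ^ 2 := by
    have h := sq_sum_le_card_mul_sum_sq (s := Finset.range (j+1)) (f := r)
    rw [Finset.card_range] at h
    rw [hS]
    exact_mod_cast h
  have hRsum0 : 0 ≤ ∑ i ∈ Finset.range (j+1), r i ^ 2 :=
    Finset.sum_nonneg fun i _ => sq_nonneg _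
  have hei : ∀ i ∈ Finset.range (j+1), e i ^ 2 ≤ (3/2 * ρ * S j)^2 := by
    intro i hi
    rw [Finset.mem_range] at hi
    have h1 := (hbc i (by omega)).1
    have h2 := hSmono i j (by omega)
    have h3 : e i ≤ 3/2 * ρ * S j := by nlinarith [mul_le_mul_of_nonneg_left h2 hρ0]
    exact pow_le_pow_left₀ (he0 i) h3 2
  have hsum : ∑ i ∈ Finset.range (j+1), e i ^ 2 ≤ ((j : ℝ)+1) * (3/2 * ρ * S j)^2 := by
    calc ∑ i ∈ Finset.range (j+1), e i ^ 2
        ≤ ∑ _i ∈ Finset.range (j+1), (3/2 * ρ * S j)^2 := Finset.sum_le_sum hei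
      _ = ((j : ℝ)+1) * (3/2 * ρ * S j)^2 := by
          rw [Finset.sum_const, Finset.card_range, nsmul_eq_mul]; push_cast; ring
  have hjm : ((j : ℝ) + 1) ≤ (m : ℝ) := by exact_mod_cast hj
  have hρj : ρ * ((j : ℝ)+1) ≤ 1/4 := by nlinarith
  have hρj0 : 0 ≤ ρ * ((j : ℝ)+1) := by positivity
  have hsq : (ρ * ((j : ℝ)+1))^2 ≤ 1/16 := by nlinarith
  calc ∑ i ∈ Finset.range (j+1), e i ^ 2
      ≤ ((j : ℝ)+1) * (3/2 * ρ * S j)^2 := hsum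
    _ = 9/4 * ρ^2 * ((j : ℝ)+1) * S j ^ 2 := by ring
    _ ≤ 9/4 * ρ^2 * ((j : ℝ)+1) * (((j : ℝ)+1) * ∑ i ∈ Finset.range (j+1), r i ^ 2) := by
        apply mul_le_mul_of_nonneg_left hcs (by positivity)
    _ = 9/4 * (ρ * ((j : ℝ)+1))^2 * ∑ i ∈ Finset.range (j+1), r i ^ 2 := by ring
    _ ≤ 9/4 * (1/16) * ∑ i ∈ Finset.range (j+1), r i ^ 2 := by nlinarith
    _ = 9/64 * ∑ i ∈ Finset.range (j+1), r i ^ 2 := by ring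
/-- Under the LEN setup with monotone `F`, `L`-Lipschitz `F'`, `M ≥ 4 m L`, and a root
`z*` of `F`, the iterates stay bounded: `‖z_t − z*‖ ≤ R` and `‖z_{t+1/2} − z*‖ ≤ 3R`,
where `R = ‖z_0 − z*‖`; in particular all iterates lie in the closed ball of radius
`3R` around `z*`. -/
theorem len_iterates_bounded
    {E : Type*} [NormedAddCommGroup E] [InnerProductSpace ℝ E] [FiniteDimensional ℝ E]
    (F : E → E) (F' : E → E →L[ℝ] E) (L M : ℝ) (m : ℕ) (hm : 1 ≤ m)
    (hdiff : ∀ x : E, HasFDerivAt F (F' x) x)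
    (hLip : ∀ x y : E, ‖F' x - F' y‖ ≤ L * ‖x - y‖)
    (hmono : ∀ x y : E, 0 ≤ ⟪F x - F y, x - y⟫)
    (hMpos : 0 < M) (hM : 4 * (m : ℝ) * L ≤ M)
    (z w : ℕ → E) (η : ℕ → ℝ)
    (hne : ∀ t, w t ≠ z t)
    (hnewton : ∀ t, F (z t) + F' (z (m * (t / m))) (w t - z t)
        + (M * ‖w t - z t‖) • (w t - z t) = 0)
    (hη : ∀ t, η t = 1 / (M * ‖z t - w t‖))
    (hupdate : ∀ t, z (t + 1) = z t - η t • F (w t))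
    (zstar : E) (hstar : F zstar = 0)
    (R : ℝ) (hR : R = ‖z 0 - zstar‖) :
    (∀ t : ℕ, ‖z t - zstar‖ ≤ R) ∧ (∀ t : ℕ, ‖w t - zstar‖ ≤ 3 * R) ∧
      (∀ t : ℕ, z t ∈ Metric.closedBall zstar (3 * R) ∧
        w t ∈ Metric.closedBall zstar (3 * R)) := by
  have hR0 : 0 ≤ R := hR ▸ norm_nonneg _
  have hrpos : ∀ t, 0 < ‖w t - z t‖ := fun t => norm_pos_iff.mpr (sub_ne_zero.mpr (hne t))
  have hL : 0 ≤ L := by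
    have h := hLip (w 0) (z 0)
    nlinarith [norm_nonneg (F' (w 0) - F' (z 0)), hrpos 0]
  have hη0 : ∀ t, 0 ≤ η t := by
    intro t; rw [hη t]; positivity
  have hρ0 : 0 ≤ L / M := by positivity
  have hρm : (m : ℝ) * (L / M) ≤ 1/4 := by
    rw [show (m : ℝ) * (L / M) = ((m : ℝ) * L) / M by ring, div_le_iff₀ hMpos]
    linarith
  have herr : ∀ t, ‖z (t+1) - w t‖ ≤ L / M * (‖w t - z t‖ + ‖z t - z (m * (t / m))‖) :=
    fun t => len_error F F' L M hMpos hL hdiff hLip (z t) (w t) (z (m * (t / m))) (z (t+1))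
      (hne t) (hnewton t) (η t) (hη t) (hupdate t)
  have hdesc : ∀ t, ‖z (t+1) - zstar‖ ^ 2
      ≤ ‖z t - zstar‖ ^ 2 - ‖w t - z t‖ ^ 2 + ‖z (t+1) - w t‖ ^ 2 :=
    fun t => len_descent F zstar hstar hmono (z t) (w t) (z (t+1)) (η t) (hη0 t) (hupdate t)
  -- the block inequality
  have hblock : ∀ k j : ℕ, j < m →
      ‖z (m*k + j + 1) - zstar‖ ^ 2 ≤ ‖z (m*k) - zstar‖ ^ 2
        - 55/64 * ∑ i ∈ Finset.range (j+1), ‖w (m*k+i) - z (m*k+i)‖ ^ 2 := by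
    intro k j hj
    have hsum : ∀ j' : ℕ, ‖z (m*k + j' + 1) - zstar‖ ^ 2 ≤ ‖z (m*k) - zstar‖ ^ 2
        - ∑ i ∈ Finset.range (j'+1), ‖w (m*k+i) - z (m*k+i)‖ ^ 2
        + ∑ i ∈ Finset.range (j'+1), ‖z (m*k+i+1) - w (m*k+i)‖ ^ 2 := by
      intro j'
      induction j' with
      | zero => simpa using hdesc (m*k)
      | succ i IH =>
        have hr1 := Finset.sum_range_succ
          (fun i' => ‖w (m*k+i') - z (m*k+i')‖ ^ 2) (i+1)
        have he1 := Finset.sum_range_succ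
          (fun i' => ‖z (m*k+i'+1) - w (m*k+i')‖ ^ 2) (i+1)
        have h := hdesc (m*k + i + 1)
        simp only [← add_assoc] at hr1 he1 ⊢
        rw [hr1, he1]
        linarith
    have hd : ∀ j' : ℕ, ‖z (m*k + j') - z (m*k)‖
        ≤ ∑ i ∈ Finset.range j', (‖w (m*k+i) - z (m*k+i)‖ + ‖z (m*k+i+1) - w (m*k+i)‖) := by
      intro j'
      induction j' with
      | zero => simp
      | succ i IH =>
        rw [Finset.sum_range_succ]
        simp only [← add_assoc]
        have h0 : z (m*k+i+1) - z (m*k) = (z (m*k+i+1) - w (m*k+i))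
            + ((w (m*k+i) - z (m*k+i)) + (z (m*k+i) - z (m*k))) := by abel
        calc ‖z (m*k+i+1) - z (m*k)‖
            ≤ ‖z (m*k+i+1) - w (m*k+i)‖ + (‖w (m*k+i) - z (m*k+i)‖ + ‖z (m*k+i) - z (m*k)‖) := by
              rw [h0]; exact norm_add_le_of_le le_rfl (norm_add_le _ _)
          _ ≤ _ := by linarith
    have hquot : ∀ j' : ℕ, j' < m → m * ((m*k + j') / m) = m*k := by
      intro j' hj'
      rw [Nat.mul_add_div (by omega), Nat.div_eq_of_lt hj', Nat.add_zero]
    have hem : ∀ j' : ℕ, j' < m → ‖z (m*k+j'+1) - w (m*k+j')‖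
        ≤ L/M * (∑ i ∈ Finset.range (j'+1), ‖w (m*k+i) - z (m*k+i)‖
          + ∑ i ∈ Finset.range j', ‖z (m*k+i+1) - w (m*k+i)‖) := by
      intro j' hj'
      have h1 := herr (m*k + j')
      rw [hquot j' hj'] at h1
      have h2 := hd j'
      rw [Finset.sum_add_distrib] at h2
      have h3 : ∑ i ∈ Finset.range (j'+1), ‖w (m*k+i) - z (m*k+i)‖
          = ∑ i ∈ Finset.range j', ‖w (m*k+i) - z (m*k+i)‖ + ‖w (m*k+j') - z (m*k+j')‖ :=
        Finset.sum_range_succ _ _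
      have h4 : ‖w (m*k+j') - z (m*k+j')‖ + ‖z (m*k+j') - z (m*k)‖
          ≤ ∑ i ∈ Finset.range (j'+1), ‖w (m*k+i) - z (m*k+i)‖
            + ∑ i ∈ Finset.range j', ‖z (m*k+i+1) - w (m*k+i)‖ := by
        rw [h3]
        have : 0 ≤ ∑ i ∈ Finset.range j', ‖w (m*k+i) - z (m*k+i)‖ :=
          Finset.sum_nonneg fun i _ => norm_nonneg _
        linarith
      calc ‖z (m*k+j'+1) - w (m*k+j')‖
          ≤ L/M * (‖w (m*k+j') - z (m*k+j')‖ + ‖z (m*k+j') - z (m*k)‖) := h1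
        _ ≤ _ := mul_le_mul_of_nonneg_left h4 hρ0
    have hkey := len_block m hm (L/M) hρ0 hρm
      (fun i => ‖w (m*k+i) - z (m*k+i)‖) (fun i => ‖z (m*k+i+1) - w (m*k+i)‖)
      (fun i => norm_nonneg _) (fun i => norm_nonneg _) hem j hj
    have h5 := hsum j
    linarith
  -- block starts stay within R
  have hz0 : ∀ k : ℕ, ‖z (m*k) - zstar‖ ^ 2 ≤ R ^ 2 := by
    intro k
    induction k with
    | zero => simp [hR]
    | succ k IH =>
      have h := hblock k (m-1) (by omega)
      have hix : m*k + (m-1) + 1 = m*(k+1) := by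
        have h1 : m - 1 + 1 = m := by omega
        rw [Nat.add_assoc, h1]
        ring
      rw [hix] at h
      have hnn : 0 ≤ ∑ i ∈ Finset.range ((m-1)+1), ‖w (m*k+i) - z (m*k+i)‖ ^ 2 :=
        Finset.sum_nonneg fun i _ => sq_nonneg _
      linarith
  have hzsq : ∀ t : ℕ, ‖z t - zstar‖ ^ 2 ≤ R ^ 2 := by
    intro t
    have hix : m * (t/m) + t % m = t := Nat.div_add_mod t m
    rcases Nat.eq_zero_or_pos (t % m) with h0 | h0
    · rw [h0, Nat.add_zero] at hix
      rw [← hix]; exact hz0 (t/m)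
    · obtain ⟨j, hj⟩ : ∃ j, t % m = j + 1 := ⟨t % m - 1, by omega⟩
      have hjm : j + 1 < m ∨ j + 1 = m := by
        have := Nat.mod_lt t (show 0 < m by omega)
        omega
      have hjlt : j < m := by rcases hjm with h | h <;> omega
      have h := hblock (t/m) j hjlt
      have hix2 : m * (t/m) + j + 1 = t := by rw [Nat.add_assoc, ← hj]; exact hix
      rw [hix2] at h
      have hnn : 0 ≤ ∑ i ∈ Finset.range (j+1), ‖w (m*(t/m)+i) - z (m*(t/m)+i)‖ ^ 2 :=
        Finset.sum_nonneg fun i _ => sq_nonneg _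
      have := hz0 (t/m)
      linarith
  have hzn : ∀ t : ℕ, ‖z t - zstar‖ ≤ R := by
    intro t
    nlinarith [hzsq t, norm_nonneg (z t - zstar), hR0]
  have hw2R : ∀ t : ℕ, ‖w t - z t‖ ≤ 2 * R := by
    intro t
    have hjm : t % m < m := Nat.mod_lt t (by omega)
    have h := hblock (t/m) (t % m) hjm
    have hterm : ‖w (m*(t/m) + t % m) - z (m*(t/m) + t % m)‖ ^ 2
        ≤ ∑ i ∈ Finset.range (t % m + 1), ‖w (m*(t/m)+i) - z (m*(t/m)+i)‖ ^ 2 :=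
      Finset.single_le_sum (f := fun i => ‖w (m*(t/m)+i) - z (m*(t/m)+i)‖ ^ 2)
        (fun i _ => sq_nonneg _) (Finset.self_mem_range_succ _)
    have hix : m * (t/m) + t % m = t := Nat.div_add_mod t m
    rw [hix] at hterm
    have h0 : 0 ≤ ‖z (m*(t/m) + t % m + 1) - zstar‖ ^ 2 := sq_nonneg _
    have hzb := hz0 (t/m)
    have h1 : 55/64 * ‖w t - z t‖ ^ 2 ≤ R ^ 2 := by linarith
    nlinarith [norm_nonneg (w t - z t), hR0]
  have hwn : ∀ t : ℕ, ‖w t - zstar‖ ≤ 3 * R := by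
    intro t
    have htri : ‖w t - zstar‖ ≤ ‖w t - z t‖ + ‖z t - zstar‖ := by
      have h := norm_add_le (w t - z t) (z t - zstar)
      rw [sub_add_sub_cancel] at h
      exact h
    linarith [hw2R t, hzn t]
  refine ⟨hzn, hwn, fun t => ⟨?_, ?_⟩⟩
  · rw [Metric.mem_closedBall, dist_eq_norm]
    linarith [hzn t, hR0]
  · rw [Metric.mem_closedBall, dist_eq_norm]
    exact hwn t
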